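/- For every k ≥ 1, β_k < α_k < β_{k+1}. -/
import Mathlib


open Finset

/-- The silver ratio ρ = 1 + √2. -/
noncomputable def rho : ℝ := 1 + Real.sqrt 2

/-- Entry `i` of the silver stepsize schedule π^(k) ∈ ℝ^(2^k − 1) (0-indexed):
π^(1) = [√2], π^(k+1) = [π^(k), β_k, π^(k)] where β_k = 1 + ρ^(k−1). -/
noncomputable def piSilver : ℕ → ℕ → ℝ
  | 0, _ => 0
  | 1, _ => Real.sqrt 2
  | k + 2, i =>
      if i < 2 ^ (k + 1) - 1 then piSilver (k + 1) i
      else if i = 2 ^ (k + 1) - 1 then 1 + rho ^ k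
      else piSilver (k + 1) (i - 2 ^ (k + 1))

/-- The sequence r_k: r_1 = 4, r_{k+1} = (r_k + 4ρ^k + √(r_k(r_k + 8ρ^k)))/2. -/
noncomputable def rseq : ℕ → ℝ
  | 0 => 0
  | 1 => 4
  | k + 2 =>
      (rseq (k + 1) + 4 * rho ^ (k + 1)
        + Real.sqrt (rseq (k + 1) * (rseq (k + 1) + 8 * rho ^ (k + 1)))) / 2

/-- α_k = 1 + (√(r_k(r_k + 8ρ^k)) − r_k)/4. -/
noncomputable def alphaSeq (k : ℕ) : ℝ :=
  1 + (Real.sqrt (rseq k * (rseq k + 8 * rho ^ k)) - rseq k) / 4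

/-- Entry `i` of h_right^(k) ∈ ℝ^(2^k − 1) (0-indexed):
h_right^(1) = [3/2], h_right^(k+1) = [π^(k), α_k, h_right^(k)]. -/
noncomputable def hright : ℕ → ℕ → ℝ
  | 0, _ => 0
  | 1, _ => 3 / 2
  | k + 2, i =>
      if i < 2 ^ (k + 1) - 1 then piSilver (k + 1) i
      else if i = 2 ^ (k + 1) - 1 then alphaSeq (k + 1)
      else hright (k + 1) (i - 2 ^ (k + 1))

/-- h_left^(k) is h_right^(k) with its entries reversed. -/
noncomputable def hleft (k i : ℕ) : ℝ := hright k (2 ^ k - 2 - i)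

/-- β_k = 1 + ρ^(k−1) for integer k. -/
noncomputable def betaZ (k : ℤ) : ℝ := 1 + rho ^ (k - 1)

lemma one_lt_sqrt_two : (1:ℝ) < Real.sqrt 2 := by
  rw [show (1:ℝ) = Real.sqrt 1 from Real.sqrt_one.symm]
  exact Real.sqrt_lt_sqrt (by norm_num) (by norm_num)

lemma two_lt_rho : (2:ℝ) < rho := by
  have := one_lt_sqrt_two; unfold rho; linarith

lemma rho_pos : (0:ℝ) < rho := by linarith [two_lt_rho]

lemma rseq_ge (m : ℕ) : 2 * rho ^ m ≤ rseq (m + 1) := by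
  induction m with
  | zero => simp [rseq]; norm_num
  | succ n ih =>
    have h1 : 0 < rho ^ (n + 1) := pow_pos rho_pos _
    have h2 : 0 ≤ Real.sqrt (rseq (n+1) * (rseq (n+1) + 8 * rho ^ (n+1))) :=
      Real.sqrt_nonneg _
    have h3 : 0 < rho ^ n := pow_pos rho_pos _
    show 2 * rho ^ (n + 1) ≤
      (rseq (n + 1) + 4 * rho ^ (n + 1)
        + Real.sqrt (rseq (n + 1) * (rseq (n + 1) + 8 * rho ^ (n + 1)))) / 2
    nlinarith [ih]

/-- **Lemma.** For every `k ≥ 1`, `β_k < α_k < β_{k+1}`. -/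
theorem beta_alpha_beta (k : ℕ) (hk : 1 ≤ k) :
    betaZ (k : ℤ) < alphaSeq k ∧ alphaSeq k < betaZ ((k : ℤ) + 1) := by
  obtain ⟨m, rfl⟩ : ∃ m, k = m + 1 := ⟨k - 1, (Nat.succ_pred_eq_of_pos hk).symm⟩
  have hb1 : betaZ ((m + 1 : ℕ) : ℤ) = 1 + rho ^ m := by
    unfold betaZ
    rw [show ((m + 1 : ℕ) : ℤ) - 1 = (m : ℤ) by push_cast; ring, zpow_natCast]
  have hb2 : betaZ (((m + 1 : ℕ) : ℤ) + 1) = 1 + rho ^ (m + 1) := by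
    unfold betaZ
    rw [show ((m + 1 : ℕ) : ℤ) + 1 - 1 = ((m + 1 : ℕ) : ℤ) by push_cast; ring,
      zpow_natCast]
  set r := rseq (m + 1) with hr
  set p := rho ^ (m + 1) with hp
  have hge : 2 * rho ^ m ≤ r := rseq_ge m
  have hm : (0:ℝ) < rho ^ m := pow_pos rho_pos _
  have hppos : (0:ℝ) < p := pow_pos rho_pos _
  have hrpos : (0:ℝ) < r := by nlinarith
  have hrho := two_lt_rho
  have hps : p = rho ^ m * rho := pow_succ rho m
  have hupper : Real.sqrt (r * (r + 8 * p)) < r + 4 * p := by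
    rw [Real.sqrt_lt' (by positivity)]
    nlinarith
  have hlower : r + 4 * rho ^ m < Real.sqrt (r * (r + 8 * p)) := by
    rw [Real.lt_sqrt (by positivity)]
    nlinarith [mul_nonneg (sub_nonneg.2 hge) hm.le,
      mul_pos (mul_pos hm hm) (show (0:ℝ) < rho - 2 by linarith)]
  constructor
  · rw [hb1]; unfold alphaSeq; rw [← hr, ← hp]; linarith
  · rw [hb2]; unfold alphaSeq; rw [← hr, ← hp]; linarith
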